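/- There exists C > 0 such that for every k ∈ ℤ with |k| ≥ 3: |λ_k^+ − (−1 + ik)| ≤ C k^{−2} and |λ_k^- − (−k² + 1 + ik)| ≤ C k^{−2}. -/
import Mathlib


/-- The hyperbolic eigenvalue branch `λ_k⁺ = (-(k² - 2ik) + √(k⁴ - 4k²))/2`, with the
principal complex square root. -/
noncomputable def lamP (k : ℤ) : ℂ :=
  (-((k:ℂ)^2 - 2*Complex.I*(k:ℂ)) + ((k:ℂ)^4 - 4*(k:ℂ)^2) ^ ((1:ℂ)/2)) / 2

/-- The parabolic eigenvalue branch `λ_k⁻ = (-(k² - 2ik) - √(k⁴ - 4k²))/2`, with the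
principal complex square root. -/
noncomputable def lamM (k : ℤ) : ℂ :=
  (-((k:ℂ)^2 - 2*Complex.I*(k:ℂ)) - ((k:ℂ)^4 - 4*(k:ℂ)^2) ^ ((1:ℂ)/2)) / 2

/-- **Asymptotics of the two spectral branches:** there is `C > 0` such that for `|k| ≥ 3`,
`|λ_k⁺ - (-1 + ik)| ≤ C k⁻²` and `|λ_k⁻ - (-k² + 1 + ik)| ≤ C k⁻²`. -/
theorem eigenvalue_asymptotics :
    ∃ C > (0:ℝ), ∀ k : ℤ, 3 ≤ |k| →
      ‖lamP k - (-1 + Complex.I * (k:ℂ))‖ ≤ C / (k:ℝ)^2 ∧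
      ‖lamM k - (-(k:ℂ)^2 + 1 + Complex.I * (k:ℂ))‖ ≤ C / (k:ℝ)^2 := by
  refine ⟨3, by norm_num, fun k hk => ?_⟩
  set K : ℝ := (k:ℝ) with hKdef
  have hK2 : (9:ℝ) ≤ K^2 := by
    have : (3:ℝ) ≤ |K| := by
      have := hk
      calc (3:ℝ) = ((3:ℤ):ℝ) := by norm_num
        _ ≤ ((|k|:ℤ):ℝ) := by exact_mod_cast hk
        _ = |K| := by push_cast; rfl
    calc (9:ℝ) = 3 * 3 := by norm_num
      _ ≤ |K| * |K| := by nlinarith [abs_nonneg K]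
      _ = |K|^2 := by ring
      _ = K^2 := sq_abs K
  set r : ℝ := K^4 - 4*K^2 with hrdef
  have hr : 0 ≤ r := by nlinarith
  set s : ℝ := Real.sqrt r with hsdef
  have hs0 : 0 ≤ s := Real.sqrt_nonneg r
  have hs2 : s^2 = r := Real.sq_sqrt hr
  have hsle : s ≤ K^2 - 2 := by
    have h1 : r ≤ (K^2 - 2)^2 := by nlinarith
    have := Real.sqrt_le_sqrt h1
    rwa [Real.sqrt_sq (by nlinarith : (0:ℝ) ≤ K^2 - 2)] at this
  have hkey : K^2 - 2 - s ≤ 4 / (K^2 - 2) := by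
    have hpos : 0 < K^2 - 2 := by nlinarith
    rw [le_div_iff₀ hpos]
    nlinarith
  have hbound : (K^2 - 2 - s)/2 ≤ 3 / K^2 := by
    have hpos : 0 < K^2 - 2 := by nlinarith
    have hK2pos : 0 < K^2 := by nlinarith
    have h0 : 4/(K^2-2) = 2 * (2/(K^2-2)) := by ring
    have h1 : (K^2 - 2 - s)/2 ≤ 2 / (K^2 - 2) := by linarith
    have h2 : 2 / (K^2 - 2) ≤ 3 / K^2 := by
      rw [div_le_div_iff₀ hpos hK2pos]; nlinarith
    linarith
  have hsqC : ((k:ℂ)^4 - 4*(k:ℂ)^2) ^ ((1:ℂ)/2) = ((s:ℝ):ℂ) := by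
    have h1 : ((k:ℂ)^4 - 4*(k:ℂ)^2) = ((r:ℝ):ℂ) := by
      rw [hrdef, hKdef]; push_cast; ring
    rw [h1, show ((1:ℂ)/2) = (((1/2:ℝ)):ℂ) by norm_num,
        ← Complex.ofReal_cpow hr, hsdef, Real.sqrt_eq_rpow]
  have hnn : 0 ≤ K^2 - 2 - s := by linarith
  constructor
  · have heq : lamP k - (-1 + Complex.I * (k:ℂ)) = (((s - (K^2 - 2))/2 : ℝ) : ℂ) := by
      rw [lamP, hsqC, hKdef]; push_cast; ring
    rw [heq, Complex.norm_real, Real.norm_eq_abs,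
        show (s - (K^2 - 2))/2 = -((K^2 - 2 - s)/2) by ring, abs_neg,
        abs_of_nonneg (by linarith)]
    exact hbound
  · have heq : lamM k - (-(k:ℂ)^2 + 1 + Complex.I * (k:ℂ)) = (((K^2 - 2 - s)/2 : ℝ) : ℂ) := by
      rw [lamM, hsqC, hKdef]; push_cast; ring
    rw [heq, Complex.norm_real, Real.norm_eq_abs, abs_of_nonneg (by linarith)]
    exact hbound
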